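/- Let G be a finite cyclic group of order n ≥ 3 and H ≠ {e} a subgroup. Then the generalized non-coprime graph Γ_{G,H} is a cycle if and only if H = G and G ≅ Z_4. -/

import Mathlib

/-- The generalized non-coprime graph of a group `G` with respect to a subgroup `H`:
vertices are the non-identity elements of `G`, and distinct vertices `a`, `b` are
adjacent iff `gcd(|a|,|b|) ≠ 1` and `a ∈ H` or `b ∈ H`. -/
def genNonCoprimeGraph (G : Type*) [Group G] (H : Subgroup G) :
    SimpleGraph {x : G // x ≠ 1} where
  Adj a b := a ≠ b ∧ Nat.gcd (orderOf (a : G)) (orderOf (b : G)) ≠ 1 ∧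
    ((a : G) ∈ H ∨ (b : G) ∈ H)
  symm := by
    constructor
    intro a b h
    exact ⟨h.1.symm, by rw [Nat.gcd_comm]; exact h.2.1, h.2.2.symm⟩
  loopless := by
    constructor
    intro a h
    exact h.1 rfl

/-!
A nontrivial `h ∈ H` is adjacent to every other element whose order shares a prime `p`
with `|h|`, and a cyclic group of order `n` has at least `n - n / p` elements of order
divisible by `p`. So 2-regularity forces `n - n / p ≤ 3`, i.e. `n ≤ 4` or `n = 6`.
A vertex outside `H` has all its neighbours in `H \ {e}`, so `H ≠ G` forces `|H| ≥ 3`: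
for `n = 4` this gives `H = G`, and for `n = 6` it puts an element of order `3` into `H`,
which violates the bound for `p = 3`. Conversely, in a group of order `4` every
nontrivial order is even, so `Γ_{G,G}` is the triangle.
-/

theorem Nat.le_four_or_eq_six_of_sub_div_le_three {n p : ℕ} (hp : 2 ≤ p) (hpn : p ∣ n)
    (h : n - n / p ≤ 3) : n ≤ 4 ∨ n = 6 := by
  obtain ⟨m, rfl⟩ := hpn
  rw [Nat.mul_div_cancel_left m (by omega)] at h
  have hm : 2 * m ≤ p * m := Nat.mul_le_mul_right m hp
  have hm3 : m ≤ 3 := by omega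
  interval_cases m <;> omega

theorem IsCyclic.card_sub_card_div_le_ncard_prime_dvd_orderOf {G : Type*} [Group G] [Finite G]
    [IsCyclic G] {p : ℕ} (hp : p.Prime) (hpG : p ∣ Nat.card G) :
    Nat.card G - Nat.card G / p ≤ {x : G | p ∣ orderOf x}.ncard := by
  classical
  have := Fintype.ofFinite G
  set m := Nat.card G / p
  have hm : 0 < m := Nat.div_pos (Nat.le_of_dvd Nat.card_pos hpG) hp.pos
  have hroots : {x : G | x ^ m = 1}.ncard ≤ m := by
    simpa [Set.ncard_eq_toFinset_card'] using IsCyclic.card_pow_eq_one_le (α := G) hm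
  have hsub : {x : G | x ^ m = 1}ᶜ ⊆ {x : G | p ∣ orderOf x} := by
    intro x hx
    by_contra hpx
    have hdvd : orderOf x ∣ p * m := Nat.mul_div_cancel' hpG ▸ orderOf_dvd_natCard x
    exact hx (orderOf_dvd_iff_pow_eq_one.mp
      ((hp.coprime_iff_not_dvd.mpr hpx).symm.dvd_of_dvd_mul_left hdvd))
  calc Nat.card G - m ≤ Nat.card G - {x : G | x ^ m = 1}.ncard := by omega
    _ = {x : G | x ^ m = 1}ᶜ.ncard := (Set.ncard_compl _).symm
    _ ≤ _ := Set.ncard_le_ncard hsub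

theorem Nat.card_subtype_ne_eq {α : Type*} [Finite α] (a : α) :
    Nat.card {x : α // x ≠ a} = Nat.card α - 1 :=
  (Nat.card_coe_set_eq {a}ᶜ).trans (by rw [Set.ncard_compl, Set.ncard_singleton])

namespace genNonCoprimeGraph

variable {G : Type*} [Group G] {H : Subgroup G}

theorem ncard_neighborSet (v : {x : G // x ≠ 1}) :
    ((genNonCoprimeGraph G H).neighborSet v).ncard =
      {x : G | x ≠ 1 ∧ x ≠ v ∧ (orderOf (v : G)).gcd (orderOf x) ≠ 1 ∧
        ((v : G) ∈ H ∨ x ∈ H)}.ncard := by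
  rw [← Set.ncard_image_of_injective _ Subtype.val_injective]
  congr 1
  ext x
  constructor
  · rintro ⟨w, ⟨hvw, hgcd, hH⟩, rfl⟩
    exact ⟨w.2, fun h ↦ hvw (Subtype.ext h.symm), hgcd, hH⟩
  · rintro ⟨hx1, hxv, hgcd, hH⟩
    exact ⟨⟨x, hx1⟩, ⟨fun h ↦ hxv (congrArg Subtype.val h).symm, hgcd, hH⟩, rfl⟩

theorem ncard_neighborSet_le_card_sub_two [Finite G] (v : {x : G // x ≠ 1}) :
    ((genNonCoprimeGraph G H).neighborSet v).ncard ≤ Nat.card G - 2 := by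
  rw [ncard_neighborSet, ← Set.ncard_pair v.2.symm, ← Set.ncard_compl]
  exact Set.ncard_le_ncard fun x hx ↦ by simp_all

theorem ncard_neighborSet_le_card_sub_one_of_notMem [Finite G] {v : {x : G // x ≠ 1}}
    (hv : (v : G) ∉ H) : ((genNonCoprimeGraph G H).neighborSet v).ncard ≤ Nat.card H - 1 := by
  have hH : Nat.card H = (H : Set G).ncard := Nat.card_coe_set_eq _
  rw [ncard_neighborSet, hH, ← Set.ncard_sdiff_singleton_of_mem H.one_mem]
  exact Set.ncard_le_ncard fun x hx ↦ by simp_all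

theorem ncard_sub_one_le_ncard_neighborSet [Finite G] {h : G} (hh : h ∈ H) (h1 : h ≠ 1)
    {p : ℕ} (hp : p ≠ 1) (hph : p ∣ orderOf h) :
    {x : G | p ∣ orderOf x}.ncard - 1 ≤ ((genNonCoprimeGraph G H).neighborSet ⟨h, h1⟩).ncard := by
  refine (Set.pred_ncard_le_ncard_sdiff_singleton _ h).trans ?_
  rw [ncard_neighborSet]
  refine Set.ncard_le_ncard fun x ⟨hpx, hxh⟩ ↦ ⟨?_, hxh, ?_, Or.inl hh⟩
  · rintro rfl
    exact hp (Nat.dvd_one.mp (orderOf_one (G := G) ▸ hpx))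
  · exact fun hgcd ↦ hp (Nat.dvd_one.mp (hgcd ▸ Nat.dvd_gcd hph hpx))

theorem eq_top_of_isPGroup {p : ℕ} [Fact p.Prime] (hG : IsPGroup p G) :
    genNonCoprimeGraph G ⊤ = ⊤ := by
  ext a b
  refine ⟨fun h ↦ h.1, fun hab ↦ ⟨hab, fun hgcd ↦ ?_, Or.inl trivial⟩⟩
  have hdvd (x : {x : G // x ≠ 1}) : p ∣ orderOf (x : G) := by
    obtain ⟨k, hk⟩ := IsPGroup.iff_orderOf.mp hG x
    have hk0 : k ≠ 0 := by
      rintro rfl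
      exact x.2 (orderOf_eq_one_iff.mp (by simpa using hk))
    exact hk ▸ dvd_pow_self p hk0
  exact (Fact.out : p.Prime).one_lt.ne' (Nat.dvd_one.mp (hgcd ▸ Nat.dvd_gcd (hdvd a) (hdvd b)))

theorem card_sub_card_div_le_three [Finite G] [IsCyclic G]
    (hdeg : ∀ v, ((genNonCoprimeGraph G H).neighborSet v).ncard = 2) {h : G} (hh : h ∈ H)
    {p : ℕ} (hp : p.Prime) (hph : p ∣ orderOf h) : Nat.card G - Nat.card G / p ≤ 3 := by
  have h1 : h ≠ 1 := by rintro rfl; simp [hp.ne_one] at hph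
  have := hdeg ⟨h, h1⟩ ▸ ncard_sub_one_le_ncard_neighborSet hh h1 hp.ne_one hph
  have := IsCyclic.card_sub_card_div_le_ncard_prime_dvd_orderOf hp
    (hph.trans (orderOf_dvd_natCard h))
  omega

theorem three_le_card_of_ne_top [Finite G]
    (hdeg : ∀ v, ((genNonCoprimeGraph G H).neighborSet v).ncard = 2) (hH : H ≠ ⊤) :
    3 ≤ Nat.card H := by
  obtain ⟨v, hv⟩ := SetLike.exists_not_mem_of_ne_top H hH rfl
  have := hdeg ⟨v, fun h ↦ hv (h ▸ H.one_mem)⟩ ▸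
    ncard_neighborSet_le_card_sub_one_of_notMem (v := ⟨v, _⟩) hv
  omega

theorem card_eq_four_or_six [Finite G] [IsCyclic G] (hH : H ≠ ⊥)
    (hdeg : ∀ v, ((genNonCoprimeGraph G H).neighborSet v).ncard = 2) :
    Nat.card G = 4 ∨ Nat.card G = 6 := by
  obtain ⟨h, hhH, hh1⟩ := H.bot_or_exists_ne_one.resolve_left hH
  have hp := Nat.minFac_prime (mt orderOf_eq_one_iff.mp hh1)
  have := hdeg ⟨h, hh1⟩ ▸ ncard_neighborSet_le_card_sub_two (H := H) ⟨h, hh1⟩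
  have := Nat.le_four_or_eq_six_of_sub_div_le_three hp.two_le
    ((Nat.minFac_dvd _).trans (orderOf_dvd_natCard h))
    (card_sub_card_div_le_three hdeg hhH hp (Nat.minFac_dvd _))
  omega

theorem eq_top_of_card_eq_four [Finite G]
    (hdeg : ∀ v, ((genNonCoprimeGraph G H).neighborSet v).ncard = 2) (h4 : Nat.card G = 4) :
    H = ⊤ := by
  by_contra hH
  have := three_le_card_of_ne_top hdeg hH
  have := h4 ▸ mt (Subgroup.card_eq_iff_eq_top H).mp hH
  have hdvd : Nat.card H ∣ 4 := h4 ▸ Subgroup.card_subgroup_dvd_card H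
  have := Nat.le_of_dvd (by norm_num) hdvd
  interval_cases Nat.card H <;> omega

theorem card_ne_six [Finite G] [IsCyclic G]
    (hdeg : ∀ v, ((genNonCoprimeGraph G H).neighborSet v).ncard = 2) : Nat.card G ≠ 6 := by
  intro h6
  have h3 : 3 ∣ Nat.card H := by
    by_cases hH : H = ⊤
    · rw [hH, Subgroup.card_top, h6]
      norm_num
    · have := three_le_card_of_ne_top hdeg hH
      have hdvd : Nat.card H ∣ 6 := h6 ▸ Subgroup.card_subgroup_dvd_card H
      have := Nat.le_of_dvd (by norm_num) hdvd
      interval_cases Nat.card H <;> omega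
  have : Fact (Nat.Prime 3) := ⟨Nat.prime_three⟩
  obtain ⟨x, hx⟩ := exists_prime_orderOf_dvd_card' 3 h3
  have := card_sub_card_div_le_three hdeg x.2 Nat.prime_three (by rw [Subgroup.orderOf_coe, hx])
  omega

theorem connected_and_ncard_neighborSet_top_of_card_eq_four [Finite G] (h4 : Nat.card G = 4) :
    (genNonCoprimeGraph G ⊤).Connected ∧
      ∀ v, ((genNonCoprimeGraph G ⊤).neighborSet v).ncard = 2 := by
  have hV : Nat.card {x : G // x ≠ 1} = 3 := by rw [Nat.card_subtype_ne_eq, h4]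
  have : Nonempty {x : G // x ≠ 1} := (Nat.card_pos_iff.mp (by omega)).1
  rw [eq_top_of_isPGroup (IsPGroup.of_card (p := 2) (n := 2) h4)]
  refine ⟨SimpleGraph.connected_top, fun v ↦ ?_⟩
  rw [SimpleGraph.neighborSet_top, Set.ncard_compl, Set.ncard_singleton, hV]

end genNonCoprimeGraph

theorem cycle_iff_general {G : Type*} [Group G] [Fintype G]
    (hG : IsCyclic G)
    (H : Subgroup G) (hH : H ≠ ⊥) :
    ((genNonCoprimeGraph G H).Connected ∧
      ∀ v : {g : G // g ≠ 1},
        ((genNonCoprimeGraph G H).neighborSet v).ncard = 2) ↔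
      (H = ⊤ ∧ Fintype.card G = 4) := by
  rw [← Nat.card_eq_fintype_card]
  constructor
  · rintro ⟨-, hdeg⟩
    rcases genNonCoprimeGraph.card_eq_four_or_six hH hdeg with h4 | h6
    · exact ⟨genNonCoprimeGraph.eq_top_of_card_eq_four hdeg h4, h4⟩
    · exact absurd h6 (genNonCoprimeGraph.card_ne_six hdeg)
  · rintro ⟨rfl, h4⟩
    exact genNonCoprimeGraph.connected_and_ncard_neighborSet_top_of_card_eq_four h4

theorem cycle_iff {G : Type*} [Group G] [Fintype G]
    (hG : IsCyclic G) (hn : 3 ≤ Fintype.card G)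
    (H : Subgroup G) (hH : H ≠ ⊥) :
    ((genNonCoprimeGraph G H).Connected ∧
      ∀ v : {g : G // g ≠ 1},
        ((genNonCoprimeGraph G H).neighborSet v).ncard = 2) ↔
      (H = ⊤ ∧ Fintype.card G = 4) :=
  cycle_iff_general hG H hH
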